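/- If S_*(KG) is a subgroup of U(KG), then S_*(KG) is a normal subgroup of U(KG). -/

import Mathlib

/-!
Symmetric elements of a group with involution are closed under `x ↦ z * x * star z`, and
`star g * g` is symmetric. So if the symmetric elements form a subgroup `H`, then for `n ∈ H`
the element `n * (star g * g)⁻¹` lies in `H`, and conjugating it by `g` in the involutive sense
gives `g * n * g⁻¹`.
-/

/-- The canonical involution on the group ring `K[G]`, sending `∑ a_g g` to `∑ a_g g⁻¹`. -/
noncomputable def gstar {K G : Type*} [CommRing K] [Group G] (x : MonoidAlgebra K G) :
    MonoidAlgebra K G := .ofCoeff (Finsupp.mapDomain (fun g => g⁻¹) x.coeff)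

theorem Subgroup.normal_of_mem_iff_isSelfAdjoint {G : Type*} [Group G] [StarMul G]
    (H : Subgroup G) (hH : ∀ g, g ∈ H ↔ IsSelfAdjoint g) : H.Normal where
  conj_mem n hn g := by
    have hnorm : n * (star g * g)⁻¹ ∈ H :=
      H.mul_mem hn (H.inv_mem ((hH _).mpr (IsSelfAdjoint.star_mul_self g)))
    have hconj : g * (n * (star g * g)⁻¹) * star g = g * n * g⁻¹ := by group
    rw [hH, ← hconj]
    exact ((hH _).mp hnorm).conjugate g

namespace MonoidAlgebra

variable {K G : Type*} [CommRing K] [Group G]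

lemma gstar_zero : gstar (0 : MonoidAlgebra K G) = 0 :=
  congrArg ofCoeff Finsupp.mapDomain_zero

lemma gstar_add (x y : MonoidAlgebra K G) : gstar (x + y) = gstar x + gstar y :=
  congrArg ofCoeff Finsupp.mapDomain_add

lemma gstar_single (g : G) (a : K) : gstar (single g a) = single g⁻¹ a :=
  congrArg ofCoeff Finsupp.mapDomain_single

lemma gstar_gstar (x : MonoidAlgebra K G) : gstar (gstar x) = x := by
  rw [gstar, gstar, coeff_ofCoeff, ← Finsupp.mapDomain_comp]
  simp only [Function.comp_def, inv_inv]
  exact congrArg ofCoeff Finsupp.mapDomain_id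

lemma gstar_mul (x y : MonoidAlgebra K G) : gstar (x * y) = gstar y * gstar x := by
  induction x using induction_linear with
  | zero => rw [zero_mul, gstar_zero, mul_zero]
  | add x₁ x₂ h₁ h₂ => rw [add_mul, gstar_add, h₁, h₂, gstar_add, mul_add]
  | single g a =>
    induction y using induction_linear with
    | zero => rw [mul_zero, gstar_zero, zero_mul]
    | add y₁ y₂ h₁ h₂ => rw [mul_add, gstar_add, h₁, h₂, gstar_add, add_mul]
    | single h b =>
      rw [single_mul_single, gstar_single, gstar_single, gstar_single, single_mul_single,
        mul_inv_rev, mul_comm a b]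

/-- Not an instance: a canonical star on `K[G]` would also have to apply any star on `K`. -/
noncomputable abbrev gstarMul : StarMul (MonoidAlgebra K G) where
  star := gstar
  star_involutive := gstar_gstar
  star_mul := gstar_mul

end MonoidAlgebra

/-- If the symmetric units form a subgroup, it is normal in the unit group. -/
theorem stmt_1 {K G : Type*} [CommRing K] [Group G]
    (H : Subgroup (MonoidAlgebra K G)ˣ)
    (hH : ∀ u : (MonoidAlgebra K G)ˣ, u ∈ H ↔ gstar (u : MonoidAlgebra K G) = u) :
    H.Normal := by
  let := MonoidAlgebra.gstarMul (K := K) (G := G)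
  refine H.normal_of_mem_iff_isSelfAdjoint fun u => ?_
  rw [hH, isSelfAdjoint_iff, Units.ext_iff, Units.coe_star]
  rfl
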